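/- Let K be an N×N real symmetric positive definite matrix with eigenvalues λ_1, …, λ_N (listed with multiplicity), let α > 0, and let K_{Z*} = K_{Z*}(K, α). Then (1/(2N))·log det(K + K_{Z*}) − (1/(2N))·log det(K_{Z*}) = (1/(2N)) · Σ_{k=1}^{N} log( (√(λ_k² + αλ_k) + λ_k) / (√(λ_k² + αλ_k) − λ_k) ). -/

import Mathlib

/-!
`K_{Z*}` and `K + K_{Z*}` are both functions of `K` in the sense of the continuous functional
calculus, namely `x ↦ (√(x² + αx) ∓ x) / 2`, so their determinants are the products of these
functions over the eigenvalues of `K`. The common factor `1/2` cancels in the ratio, and the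
eigenvalues stay inside the domain of `log` because `λ < √(λ² + αλ)` for `λ, α > 0`.
-/

open Matrix Classical

/-- The positive semidefinite square root, as `Matrix.PosSemidef.sqrt` was defined in Mathlib
(December 2024); it has since been removed from Mathlib. -/
noncomputable def Matrix.PosSemidef.sqrt {n : Type*} [Fintype n] [DecidableEq n]
    {A : Matrix n n ℝ} (hA : A.PosSemidef) : Matrix n n ℝ :=
  (hA.1.eigenvectorUnitary : Matrix n n ℝ) * diagonal ((↑) ∘ (√·) ∘ hA.1.eigenvalues) *
    (star hA.1.eigenvectorUnitary : Matrix n n ℝ)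

/-- The positive semidefinite square root of a matrix (junk value `0` if the matrix is not
positive semidefinite). -/
noncomputable def matSqrt {N : ℕ} (A : Matrix (Fin N) (Fin N) ℝ) : Matrix (Fin N) (Fin N) ℝ :=
  if h : A.PosSemidef then h.sqrt else 0

/-- The optimal distortion covariance matrix
`K_{Z*}(K, α) = (1/2)((K² + αK)^{1/2} − K)`. -/
noncomputable def Kzstar {N : ℕ} (K : Matrix (Fin N) (Fin N) ℝ) (α : ℝ) :
    Matrix (Fin N) (Fin N) ℝ :=
  (1 / 2 : ℝ) • (matSqrt (K ^ 2 + α • K) - K)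

open scoped MatrixOrder

namespace Matrix

variable {n : Type*} [Fintype n] [DecidableEq n]

theorem IsHermitian.det_cfc {A : Matrix n n ℝ} (hA : A.IsHermitian) (f : ℝ → ℝ) :
    (cfc f A).det = ∏ i, f (hA.eigenvalues i) := by
  simp [hA.cfc_eq, IsHermitian.cfc, -Unitary.conjStarAlgAut_apply]

theorem PosSemidef.sqrt_eq_cfc {A : Matrix n n ℝ} (hA : A.PosSemidef) :
    hA.sqrt = cfc Real.sqrt A := by
  rw [hA.1.cfc_eq, IsHermitian.cfc, Matrix.PosSemidef.sqrt, Unitary.conjStarAlgAut_apply]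
  rfl

end Matrix

theorem matSqrt_eq_cfc {N : ℕ} {A : Matrix (Fin N) (Fin N) ℝ} (hA : A.PosSemidef) :
    matSqrt A = cfc Real.sqrt A := by
  rw [matSqrt, dif_pos hA, hA.sqrt_eq_cfc]

theorem Kzstar_eq_cfc {N : ℕ} {K : Matrix (Fin N) (Fin N) ℝ} (hK : K.PosSemidef) {α : ℝ}
    (hα : 0 ≤ α) :
    Kzstar K α = cfc (fun x => (√(x ^ 2 + α * x) - x) / 2) K := by
  have hpoly : K ^ 2 + α • K = cfc (fun x => x ^ 2 + α * x) K := by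
    rw [cfc_add .., cfc_pow_id .., cfc_const_mul_id ..]
  have hnonneg : (K ^ 2 + α • K).PosSemidef := by
    rw [← nonneg_iff_posSemidef, hpoly]
    exact cfc_nonneg fun x hx => by
      have := spectrum_nonneg_of_nonneg hK.nonneg hx
      positivity
  simp_rw [div_eq_inv_mul]
  rw [Kzstar, matSqrt_eq_cfc hnonneg, hpoly, ← cfc_comp' Real.sqrt _ K, cfc_const_mul ..,
    cfc_sub .., cfc_id' ℝ K, one_div]

theorem add_Kzstar_eq_cfc {N : ℕ} {K : Matrix (Fin N) (Fin N) ℝ} (hK : K.PosSemidef) {α : ℝ}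
    (hα : 0 ≤ α) :
    K + Kzstar K α = cfc (fun x => (√(x ^ 2 + α * x) + x) / 2) K := by
  have hsplit : (fun x => (√(x ^ 2 + α * x) + x) / 2)
      = fun x => x + (√(x ^ 2 + α * x) - x) / 2 := by
    ext x
    ring
  rw [hsplit, cfc_add .., cfc_id' .., Kzstar_eq_cfc hK hα]

theorem Real.log_prod_sub_log_prod {ι : Type*} [Fintype ι] {a b : ι → ℝ} (ha : ∀ i, 0 < a i)
    (hb : ∀ i, 0 < b i) :
    Real.log (∏ i, a i) - Real.log (∏ i, b i) = ∑ i, Real.log (a i / b i) := by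
  rw [Real.log_prod fun i _ => (ha i).ne', Real.log_prod fun i _ => (hb i).ne',
    ← Finset.sum_sub_distrib]
  exact Finset.sum_congr rfl fun i _ => (Real.log_div (ha i).ne' (hb i).ne').symm

theorem lt_sqrt_sq_add_mul {x α : ℝ} (hx : 0 < x) (hα : 0 < α) : x < √(x ^ 2 + α * x) :=
  Real.lt_sqrt_of_sq_lt (by nlinarith [mul_pos hα hx])

theorem stmt_8 {N : ℕ} (K : Matrix (Fin N) (Fin N) ℝ) (hK : K.PosDef)
    (α : ℝ) (hα : 0 < α) :
    (1 / (2 * (N : ℝ))) * Real.log (K + Kzstar K α).det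
        - (1 / (2 * (N : ℝ))) * Real.log (Kzstar K α).det
      = (1 / (2 * (N : ℝ))) * ∑ k : Fin N,
          Real.log
            ((Real.sqrt (hK.1.eigenvalues k ^ 2 + α * hK.1.eigenvalues k) + hK.1.eigenvalues k) /
             (Real.sqrt (hK.1.eigenvalues k ^ 2 + α * hK.1.eigenvalues k) - hK.1.eigenvalues k)) := by
  have hpos := hK.eigenvalues_pos
  have hgap k := lt_sqrt_sq_add_mul (hpos k) hα
  rw [← mul_sub, add_Kzstar_eq_cfc hK.posSemidef hα.le, Kzstar_eq_cfc hK.posSemidef hα.le,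
    hK.1.det_cfc, hK.1.det_cfc,
    Real.log_prod_sub_log_prod (fun k => by linarith [hpos k, hgap k])
      (fun k => by linarith [hgap k])]
  congr 1
  refine Finset.sum_congr rfl fun k _ => ?_
  rw [div_div_div_cancel_right₀ two_ne_zero]
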